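/- Let κ > 0 and x, y ∈ ℝ² with x ≠ y. Define E(κ,x,y) = ∫_{S¹} α α^T e^{iκ α·(x−y)} dα, where α ranges over the unit circle and α α^T is the 2×2 outer product. Then E(κ,x,y) = π Q^T diag(J_0(z) − J_2(z), J_0(z) + J_2(z)) Q, where z = κ|x−y| and Q is any rotation matrix mapping (x−y)/|x−y| to the first standard basis vector. -/

import Mathlib

open MeasureTheory Real Complex Filter Matrix

/-- Bessel function of the first kind of integer order `n`. -/
noncomputable def besselJ (n : ℤ) (z : ℂ) : ℂ :=
  ∑' m : ℕ, ((-1 : ℂ) ^ m / ((m.factorial : ℂ) * Complex.Gamma ((m : ℂ) + (n : ℂ) + 1))) *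
    (z / 2) ^ (2 * (m : ℤ) + n)

/-- Point on the unit circle with angle `θ`. -/
noncomputable def circVec (θ : ℝ) : Fin 2 → ℝ := ![Real.cos θ, Real.sin θ]

/-- `E(κ,x,y) = ∫_{S¹} α α^T e^{iκ α·(x−y)} dα`, the arc-length integral computed entrywise via
the parametrization `α = (cos θ, sin θ)`. -/
noncomputable def Emat (κ : ℝ) (x y : EuclideanSpace ℝ (Fin 2)) : Matrix (Fin 2) (Fin 2) ℂ :=
  Matrix.of fun i j => ∫ θ in (0:ℝ)..(2 * π),
    ((circVec θ i : ℂ) * (circVec θ j : ℂ)) *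
      Complex.exp (Complex.I * (κ : ℂ) *
        ((circVec θ 0 * (x 0 - y 0) + circVec θ 1 * (x 1 - y 1) : ℝ) : ℂ))

/-!
Writing `Q` as the rotation by an angle `ψ`, we get `x - y = ‖x - y‖ (cos ψ, sin ψ)`, and the
substitution `θ ↦ θ + ψ` turns the phase into `z cos θ` and `α` into `Qᵀ α`, so that
`E = Qᵀ D Q` with `D = ∫ α αᵀ e^{i z cos θ} dθ`. The off-diagonal entry of `D` vanishes by the
symmetry `θ ↦ 2π - θ`. Expanding the exponential and integrating the powers of `cos` termwise gives
`∫ e^{i z cos θ} dθ = 2π J₀(z)` and, since `∫ cos^(k+2) = (k+1)/(k+2) ∫ cos^k`,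
`∫ cos² θ e^{i z cos θ} dθ = π (J₀(z) - J₂(z))`, once the series of `J₂` is reindexed onto the
coefficients of `J₀`. Finally `sin² = 1 - cos²` gives the other diagonal entry.
-/

open scoped Nat
open intervalIntegral

noncomputable def besselTerm (n m : ℕ) (z : ℂ) : ℂ :=
  (-1) ^ m / (m ! * (m + n)! : ℂ) * (z / 2) ^ (2 * m + n)

theorem besselJ_natCast (n : ℕ) (z : ℂ) : besselJ n z = ∑' m, besselTerm n m z := by
  unfold besselJ
  congr 1 with m
  rw [show (m : ℂ) + ((n : ℤ) : ℂ) + 1 = ((m + n : ℕ) : ℂ) + 1 by push_cast; ring,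
    Complex.Gamma_nat_eq_factorial, show 2 * (m : ℤ) + n = ((2 * m + n : ℕ) : ℤ) by push_cast; ring,
    zpow_natCast]
  rfl

theorem summable_besselTerm (n : ℕ) (z : ℂ) : Summable (besselTerm n · z) := by
  refine .of_norm_bounded ((Real.summable_pow_div_factorial (‖z / 2‖ ^ 2)).mul_left (‖z / 2‖ ^ n))
    fun m => ?_
  have hm : (0 : ℝ) < m ! := mod_cast m.factorial_pos
  have hmn : (1 : ℝ) ≤ (m + n)! := mod_cast (m + n).factorial_pos
  calc ‖besselTerm n m z‖ = ‖z / 2‖ ^ n * (‖z / 2‖ ^ 2) ^ m / (m ! * (m + n)!) := by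
        simp only [besselTerm, norm_mul, norm_div, norm_pow, norm_neg, norm_one, one_pow,
          Complex.norm_natCast]
        rw [pow_add, pow_mul]
        ring
    _ ≤ ‖z / 2‖ ^ n * (‖z / 2‖ ^ 2) ^ m / m ! :=
        div_le_div_of_nonneg_left (by positivity) hm (le_mul_of_one_le_right hm.le hmn)
    _ = ‖z / 2‖ ^ n * ((‖z / 2‖ ^ 2) ^ m / m !) := mul_div_assoc ..

theorem hasSum_besselJ (n : ℕ) (z : ℂ) : HasSum (besselTerm n · z) (besselJ n z) := by
  rw [besselJ_natCast]
  exact (summable_besselTerm n z).hasSum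

theorem besselTerm_two (m : ℕ) (z : ℂ) :
    besselTerm 2 m z = -((m + 1) / (m + 2)) * besselTerm 0 (m + 1) z := by
  simp only [besselTerm, Nat.factorial_succ, add_zero, pow_succ, mul_add, mul_one]
  push_cast
  field_simp
  ring

theorem hasSum_besselJ_two (z : ℂ) :
    HasSum (fun m : ℕ => -(m / (m + 1)) * besselTerm 0 m z) (besselJ 2 z) := by
  rw [← hasSum_nat_add_iff' 1]
  simpa [besselTerm_two, add_assoc, one_add_one_eq_two] using hasSum_besselJ 2 z

theorem integral_cos_pow_add_two_zero_two_pi (n : ℕ) :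
    ∫ θ in (0 : ℝ)..2 * π, Real.cos θ ^ (n + 2) =
      (n + 1) / (n + 2) * ∫ θ in (0 : ℝ)..2 * π, Real.cos θ ^ n := by
  simp [integral_cos_pow]

theorem integral_cos_pow_odd_zero_two_pi (m : ℕ) :
    ∫ θ in (0 : ℝ)..2 * π, Real.cos θ ^ (2 * m + 1) = 0 := by
  induction m with
  | zero => simp
  | succ m ih => rw [show 2 * (m + 1) + 1 = 2 * m + 1 + 2 by ring,
      integral_cos_pow_add_two_zero_two_pi, ih, mul_zero]

theorem integral_cos_pow_even_zero_two_pi (m : ℕ) :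
    ∫ θ in (0 : ℝ)..2 * π, Real.cos θ ^ (2 * m) = 2 * π * (2 * m)! / (4 ^ m * m ! ^ 2) := by
  induction m with
  | zero => simp
  | succ m ih =>
    rw [show 2 * (m + 1) = 2 * m + 2 by ring, integral_cos_pow_add_two_zero_two_pi, ih]
    simp only [Nat.factorial_succ, show 2 * m + 2 = 2 * m + 1 + 1 by ring]
    push_cast
    field_simp
    ring

theorem hasSum_integral_mul_exp_mul_cos {g : ℝ → ℂ} (hg : Continuous g) (w : ℂ) (a b : ℝ) :
    HasSum (fun k : ℕ => w ^ k / k ! * ∫ θ in a..b, g θ * (Real.cos θ : ℂ) ^ k)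
      (∫ θ in a..b, g θ * exp (w * Real.cos θ)) := by
  simp_rw [← intervalIntegral.integral_const_mul]
  refine hasSum_integral_of_dominated_convergence (fun k θ => ‖g θ‖ * (‖w‖ ^ k / k !))
    (fun k => by fun_prop) (fun k => ae_of_all _ fun θ _ => ?_)
    (ae_of_all _ fun θ _ => (Real.summable_pow_div_factorial ‖w‖).mul_left _) ?_
    (ae_of_all _ fun θ _ => ?_)
  · calc ‖w ^ k / k ! * (g θ * (Real.cos θ : ℂ) ^ k)‖
          = ‖g θ‖ * (‖w‖ ^ k / k ! * |Real.cos θ| ^ k) := by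
            simp only [norm_mul, norm_div, norm_pow, Complex.norm_natCast, Complex.norm_real,
              Real.norm_eq_abs]
            ring
      _ ≤ ‖g θ‖ * (‖w‖ ^ k / k ! * 1) := by
            gcongr
            exact pow_le_one₀ (abs_nonneg _) (abs_cos_le_one θ)
      _ = ‖g θ‖ * (‖w‖ ^ k / k !) := by rw [mul_one]
  · simp_rw [tsum_mul_left]
    exact (hg.norm.mul continuous_const).intervalIntegrable _ _
  · rw [exp_eq_exp_ℂ]
    have := (NormedSpace.expSeries_div_hasSum_exp (w * Real.cos θ)).mul_left (g θ)
    simp_rw [mul_pow, mul_div_right_comm, mul_left_comm (g θ)] at this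
    exact this

theorem integral_ofReal_cos_pow (n : ℕ) (a b : ℝ) :
    ∫ θ in a..b, (Real.cos θ : ℂ) ^ n = ((∫ θ in a..b, Real.cos θ ^ n : ℝ) : ℂ) := by
  simp_rw [← ofReal_pow]
  exact integral_ofReal

theorem integral_exp_I_mul_cos_series_term_even (z : ℂ) (m : ℕ) :
    (I * z) ^ (2 * m) / (2 * m)! * ∫ θ in (0 : ℝ)..2 * π, (Real.cos θ : ℂ) ^ (2 * m) =
      2 * π * besselTerm 0 m z := by
  have h2m : ((2 * m)! : ℂ) ≠ 0 := mod_cast (2 * m).factorial_ne_zero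
  rw [integral_ofReal_cos_pow, integral_cos_pow_even_zero_two_pi, besselTerm]
  simp only [pow_mul, mul_pow, div_pow, I_sq, add_zero]
  push_cast
  field_simp
  ring

theorem integral_exp_I_mul_cos_series_term_odd (z : ℂ) (m : ℕ) :
    (I * z) ^ (2 * m + 1) / (2 * m + 1)! * ∫ θ in (0 : ℝ)..2 * π, (Real.cos θ : ℂ) ^ (2 * m + 1) =
      0 := by
  rw [integral_ofReal_cos_pow, integral_cos_pow_odd_zero_two_pi, ofReal_zero, mul_zero]

theorem integral_exp_I_mul_cos (z : ℂ) :
    ∫ θ in (0 : ℝ)..2 * π, exp (I * z * Real.cos θ) = 2 * π * besselJ 0 z := by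
  have h := hasSum_integral_mul_exp_mul_cos (g := fun _ => 1) continuous_const (I * z) 0 (2 * π)
  simp only [one_mul] at h
  have heven := (hasSum_besselJ 0 z).mul_left (2 * π : ℂ)
  simp only [← integral_exp_I_mul_cos_series_term_even, Nat.cast_zero] at heven
  have hodd : HasSum (fun m : ℕ => (I * z) ^ (2 * m + 1) / (2 * m + 1)! *
      ∫ θ in (0 : ℝ)..2 * π, (Real.cos θ : ℂ) ^ (2 * m + 1)) 0 := by
    simp only [integral_exp_I_mul_cos_series_term_odd]
    exact hasSum_zero
  simpa using h.unique (heven.even_add_odd hodd)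

theorem integral_cos_sq_mul_cos_pow (n : ℕ) :
    ∫ θ in (0 : ℝ)..2 * π, (Real.cos θ : ℂ) ^ 2 * (Real.cos θ : ℂ) ^ n =
      (n + 1) / (n + 2) * ∫ θ in (0 : ℝ)..2 * π, (Real.cos θ : ℂ) ^ n := by
  simp_rw [← pow_add, add_comm 2 n, integral_ofReal_cos_pow, integral_cos_pow_add_two_zero_two_pi]
  push_cast
  rfl

theorem integral_cos_sq_mul_exp_I_mul_cos (z : ℂ) :
    ∫ θ in (0 : ℝ)..2 * π, (Real.cos θ : ℂ) ^ 2 * exp (I * z * Real.cos θ) =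
      π * (besselJ 0 z - besselJ 2 z) := by
  have h := hasSum_integral_mul_exp_mul_cos (g := fun θ => (Real.cos θ : ℂ) ^ 2) (by fun_prop)
    (I * z) 0 (2 * π)
  simp only [integral_cos_sq_mul_cos_pow, mul_left_comm _ ((_ : ℂ) / (_ + 2))] at h
  have heven := ((hasSum_besselJ 0 z).mul_left (π : ℂ)).sub
    ((hasSum_besselJ_two z).mul_left (π : ℂ))
  have hodd : HasSum (fun m : ℕ => ((2 * m + 1 : ℕ) + 1 : ℂ) / ((2 * m + 1 : ℕ) + 2) *
      ((I * z) ^ (2 * m + 1) / (2 * m + 1)! *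
        ∫ θ in (0 : ℝ)..2 * π, (Real.cos θ : ℂ) ^ (2 * m + 1))) 0 := by
    simp only [integral_exp_I_mul_cos_series_term_odd, mul_zero]
    exact hasSum_zero
  rw [h.unique ((heven.congr_fun ?_).even_add_odd hodd), add_zero, mul_sub, Nat.cast_zero]
  intro m
  simp only [integral_exp_I_mul_cos_series_term_even]
  push_cast
  field_simp
  ring

theorem integral_sin_sq_mul_exp_I_mul_cos (z : ℂ) :
    ∫ θ in (0 : ℝ)..2 * π, (Real.sin θ : ℂ) ^ 2 * exp (I * z * Real.cos θ) =
      π * (besselJ 0 z + besselJ 2 z) := by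
  have hsin (θ : ℝ) : (Real.sin θ : ℂ) ^ 2 * exp (I * z * Real.cos θ) =
      exp (I * z * Real.cos θ) - (Real.cos θ : ℂ) ^ 2 * exp (I * z * Real.cos θ) := by
    have h := congrArg ((↑) : ℝ → ℂ) (Real.sin_sq_add_cos_sq θ)
    push_cast at h ⊢
    linear_combination exp (I * z * Complex.cos θ) * h
  simp_rw [hsin]
  rw [intervalIntegral.integral_sub ((by fun_prop : Continuous _).intervalIntegrable _ _)
    ((by fun_prop : Continuous _).intervalIntegrable _ _), integral_exp_I_mul_cos,
    integral_cos_sq_mul_exp_I_mul_cos]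
  ring

theorem integral_sin_smul_comp_cos {E : Type*} [NormedAddCommGroup E] [NormedSpace ℝ E]
    (f : ℝ → E) : ∫ θ in (0 : ℝ)..2 * π, Real.sin θ • f (Real.cos θ) = 0 := by
  have h := integral_comp_sub_left (fun θ => Real.sin θ • f (Real.cos θ)) (2 * π) (a := 0)
    (b := 2 * π)
  simp only [Real.sin_two_pi_sub, Real.cos_two_pi_sub, neg_smul, intervalIntegral.integral_neg,
    sub_self, sub_zero] at h
  have h2 : (2 : ℝ) • ∫ θ in (0 : ℝ)..2 * π, Real.sin θ • f (Real.cos θ) = 0 := by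
    rw [two_smul]
    nth_rw 1 [← h]
    exact neg_add_cancel _
  exact (smul_eq_zero.mp h2).resolve_left two_ne_zero

theorem integral_linear_mul_linear_mul_exp_I_mul_cos (a₀ a₁ b₀ b₁ z : ℂ) :
    ∫ θ in (0 : ℝ)..2 * π, (a₀ * Real.cos θ + a₁ * Real.sin θ) *
        (b₀ * Real.cos θ + b₁ * Real.sin θ) * exp (I * z * Real.cos θ) =
      π * (a₀ * b₀ * (besselJ 0 z - besselJ 2 z) + a₁ * b₁ * (besselJ 0 z + besselJ 2 z)) := by
  have hint {f : ℝ → ℂ} (hf : Continuous f) : IntervalIntegrable f volume 0 (2 * π) :=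
    hf.intervalIntegrable _ _
  have hexpand (θ : ℝ) : (a₀ * Real.cos θ + a₁ * Real.sin θ) *
      (b₀ * Real.cos θ + b₁ * Real.sin θ) * exp (I * z * Real.cos θ) =
      a₀ * b₀ * ((Real.cos θ : ℂ) ^ 2 * exp (I * z * Real.cos θ)) +
        a₁ * b₁ * ((Real.sin θ : ℂ) ^ 2 * exp (I * z * Real.cos θ)) +
        (a₀ * b₁ + a₁ * b₀) * (Real.sin θ • ((Real.cos θ : ℂ) * exp (I * z * Real.cos θ))) := by
    rw [real_smul]
    ring
  have hcross := integral_sin_smul_comp_cos fun c : ℝ => (c : ℂ) * exp (I * z * c)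
  simp_rw [hexpand]
  rw [intervalIntegral.integral_add (hint (by fun_prop)) (hint (by fun_prop)),
    intervalIntegral.integral_add (hint (by fun_prop)) (hint (by fun_prop)),
    intervalIntegral.integral_const_mul, intervalIntegral.integral_const_mul,
    intervalIntegral.integral_const_mul, integral_cos_sq_mul_exp_I_mul_cos,
    integral_sin_sq_mul_exp_I_mul_cos, hcross]
  ring

noncomputable def rotMat (ψ : ℝ) : Matrix (Fin 2) (Fin 2) ℝ :=
  !![Real.cos ψ, Real.sin ψ; -Real.sin ψ, Real.cos ψ]

theorem exists_cos_eq_sin_eq {c s : ℝ} (h : c ^ 2 + s ^ 2 = 1) :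
    ∃ ψ, Real.cos ψ = c ∧ Real.sin ψ = s := by
  have hnorm : ‖(⟨c, s⟩ : ℂ)‖ = 1 := by
    rw [Complex.norm_def, Complex.normSq_mk, ← sq, ← sq, h, Real.sqrt_one]
  have hne : (⟨c, s⟩ : ℂ) ≠ 0 := by
    rw [← norm_ne_zero_iff, hnorm]
    exact one_ne_zero
  exact ⟨arg ⟨c, s⟩, by simp [Complex.cos_arg hne, hnorm], by simp [Complex.sin_arg, hnorm]⟩

theorem exists_eq_rotMat {Q : Matrix (Fin 2) (Fin 2) ℝ} (hQ : Q * Qᵀ = 1) (hdet : Q.det = 1) :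
    ∃ ψ, Q = rotMat ψ := by
  have h00 := congrFun (congrFun hQ 0) 0
  have h01 := congrFun (congrFun hQ 0) 1
  simp only [mul_apply, Fin.sum_univ_two, transpose_apply, one_apply_eq,
    one_apply_ne zero_ne_one] at h00 h01
  rw [det_fin_two] at hdet
  obtain ⟨ψ, hc, hs⟩ := exists_cos_eq_sin_eq (c := Q 0 0) (s := Q 0 1) (by linear_combination h00)
  refine ⟨ψ, Matrix.ext fun i j => ?_⟩
  fin_cases i <;> fin_cases j <;>
    simp only [rotMat, hc, hs, of_apply, cons_val', cons_val_zero, cons_val_one, cons_val_fin_one,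
      Fin.zero_eta, Fin.mk_one, Fin.isValue]
  · linear_combination -(Q 1 0) * h00 + Q 0 0 * h01 - Q 0 1 * hdet
  · linear_combination -(Q 1 1) * h00 + Q 0 1 * h01 + Q 0 0 * hdet

theorem circVec_add (θ ψ : ℝ) (i : Fin 2) :
    circVec (θ + ψ) i = rotMat ψ 0 i * Real.cos θ + rotMat ψ 1 i * Real.sin θ := by
  fin_cases i <;>
  · simp only [circVec, rotMat, Real.cos_add, Real.sin_add, of_apply, cons_val', cons_val_zero,
      cons_val_one, cons_val_fin_one, Fin.zero_eta, Fin.mk_one, Fin.isValue]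
    ring

theorem circVec_periodic : Function.Periodic circVec (2 * π) := fun θ => by
  simp [circVec]

theorem eq_mul_cos_of_rotMat_mulVec {ψ r : ℝ} {v : Fin 2 → ℝ}
    (hv : rotMat ψ *ᵥ v = fun i => if i = 0 then r else 0) :
    v 0 = r * Real.cos ψ ∧ v 1 = r * Real.sin ψ := by
  have h0 := congrFun hv 0
  have h1 := congrFun hv 1
  simp only [mulVec, dotProduct, rotMat, of_apply, cons_val', cons_val_zero, cons_val_one,
    cons_val_fin_one, Fin.sum_univ_two, Fin.isValue, ↓reduceIte, one_ne_zero] at h0 h1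
  have hψ := Real.sin_sq_add_cos_sq ψ
  constructor
  · linear_combination Real.cos ψ * h0 - Real.sin ψ * h1 - v 0 * hψ
  · linear_combination Real.sin ψ * h0 + Real.cos ψ * h1 - v 1 * hψ

theorem Emat_apply_of_sub_eq {κ r ψ : ℝ} {x y : EuclideanSpace ℝ (Fin 2)}
    (h0 : x 0 - y 0 = r * Real.cos ψ) (h1 : x 1 - y 1 = r * Real.sin ψ) (i j : Fin 2) :
    Emat κ x y i j = ∫ θ in (0 : ℝ)..2 * π,
      (circVec (θ + ψ) i : ℂ) * circVec (θ + ψ) j * exp (I * (κ * r : ℝ) * Real.cos θ) := by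
  set f : ℝ → ℂ := fun θ =>
    (circVec (θ + ψ) i : ℂ) * circVec (θ + ψ) j * exp (I * (κ * r : ℝ) * Real.cos θ)
  have hf : Function.Periodic f (2 * π) := fun θ => by
    simp only [f, add_right_comm θ, circVec_periodic _, Real.cos_add_two_pi]
  have hphase (θ : ℝ) : circVec θ 0 * (x 0 - y 0) + circVec θ 1 * (x 1 - y 1) =
      r * Real.cos (θ - ψ) := by
    simp only [circVec, h0, h1, Real.cos_sub, cons_val_zero, cons_val_one, cons_val_fin_one]
    ring
  calc Emat κ x y i j = ∫ θ in (0 : ℝ)..2 * π, f (θ - ψ) := by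
        simp only [Emat, of_apply, hphase, f, sub_add_cancel, ofReal_mul, mul_assoc]
    _ = ∫ θ in (0 : ℝ)..2 * π, f θ := by
        rw [integral_comp_sub_right, zero_sub, sub_eq_neg_add, hf.intervalIntegral_add_eq (-ψ) 0,
          zero_add]

theorem Emat_eq_general (κ : ℝ) (x y : EuclideanSpace ℝ (Fin 2))
    (Q : Matrix (Fin 2) (Fin 2) ℝ) (hQ : Q * Qᵀ = 1) (hdet : Q.det = 1)
    (hmap : Q.mulVec (fun i => x i - y i) = fun i => if i = 0 then ‖x - y‖ else 0) :
    Emat κ x y = (π : ℂ) •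
      ((Q.map ((↑) : ℝ → ℂ))ᵀ *
        Matrix.diagonal ![besselJ 0 ((κ * ‖x - y‖ : ℝ) : ℂ) - besselJ 2 ((κ * ‖x - y‖ : ℝ) : ℂ),
          besselJ 0 ((κ * ‖x - y‖ : ℝ) : ℂ) + besselJ 2 ((κ * ‖x - y‖ : ℝ) : ℂ)] *
        Q.map ((↑) : ℝ → ℂ)) := by
  obtain ⟨ψ, rfl⟩ := exists_eq_rotMat hQ hdet
  obtain ⟨h0, h1⟩ := eq_mul_cos_of_rotMat_mulVec hmap
  ext i j
  simp only [Emat_apply_of_sub_eq h0 h1, circVec_add, ofReal_add, ofReal_mul,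
    integral_linear_mul_linear_mul_exp_I_mul_cos]
  simp only [Matrix.smul_apply, mul_apply, transpose_apply, map_apply, Fin.sum_univ_two,
    diagonal_apply_eq, diagonal_apply_ne _ zero_ne_one, diagonal_apply_ne _ one_ne_zero,
    cons_val_zero, cons_val_one, cons_val_fin_one, smul_eq_mul]
  ring

/-- `E(κ,x,y) = π Qᵀ diag(J₀(z) − J₂(z), J₀(z) + J₂(z)) Q` with `z = κ|x−y|`,
for any rotation matrix `Q` mapping `x−y` to `|x−y| e₁`. -/
theorem Emat_eq (κ : ℝ) (hκ : 0 < κ) (x y : EuclideanSpace ℝ (Fin 2)) (hxy : x ≠ y)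
    (Q : Matrix (Fin 2) (Fin 2) ℝ) (hQ : Q * Qᵀ = 1) (hdet : Q.det = 1)
    (hmap : Q.mulVec (fun i => x i - y i) = fun i => if i = 0 then ‖x - y‖ else 0) :
    Emat κ x y = (π : ℂ) •
      ((Q.map ((↑) : ℝ → ℂ))ᵀ *
        Matrix.diagonal ![besselJ 0 ((κ * ‖x - y‖ : ℝ) : ℂ) - besselJ 2 ((κ * ‖x - y‖ : ℝ) : ℂ),
          besselJ 0 ((κ * ‖x - y‖ : ℝ) : ℂ) + besselJ 2 ((κ * ‖x - y‖ : ℝ) : ℂ)] *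
        Q.map ((↑) : ℝ → ℂ)) :=
  Emat_eq_general κ x y Q hQ hdet hmap
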